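/- Let n = n1*n2 with n1, n2 > 1, let x be a vector of length n over a commutative ring, and let X be the n2×n1 matrix whose columns are the consecutive blocks of x of length n2 (so vec(X) = x). Then L_n · x = vec(L_{n2} · X) + vec(J_{n2} · X · U⁻_{n1}), where J_{n2} = 1_{n2}·1_{n2}ᵀ. -/
import Mathlib


open Matrix

/-- Lower triangular all-ones matrix: entry 1 iff row ≥ column. -/
def Lone (R : Type*) [CommRing R] (m : ℕ) : Matrix (Fin m) (Fin m) R :=
  Matrix.of fun i j => if j ≤ i then 1 else 0

/-- Strictly upper triangular all-ones matrix: entry 1 iff i < j. -/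
def Ustrict (R : Type*) [CommRing R] (m : ℕ) : Matrix (Fin m) (Fin m) R :=
  Matrix.of fun i j => if i < j then 1 else 0

/-- All-ones matrix J. -/
def Jmat (R : Type*) [CommRing R] (m : ℕ) : Matrix (Fin m) (Fin m) R :=
  Matrix.of fun _ _ => 1

/-- vec of an `n2 × n1` matrix: stacks the columns into a vector of length `n1 * n2`,
so that `vec(Y)(i·n2 + k) = Y(k, i)`. -/
def vecM {R : Type*} [CommRing R] {n2 n1 : ℕ} (Y : Matrix (Fin n2) (Fin n1) R) :
    Fin (n1 * n2) → R :=
  fun t => Y (finProdFinEquiv.symm t).2 (finProdFinEquiv.symm t).1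

/-- The prefix sum `L_n · x` decomposes as `vec(L_{n2}·X) + vec(J_{n2}·X·U⁻_{n1})`,
where `X = mat_{n2}(x)` has the consecutive length-`n2` blocks of `x` as columns. -/
theorem prefix_sum_kronecker (R : Type*) [CommRing R]
    (n1 n2 : ℕ) (h1 : 1 < n1) (h2 : 1 < n2)
    (x : Fin (n1 * n2) → R) (X : Matrix (Fin n2) (Fin n1) R)
    (hX : ∀ (i : Fin n1) (k : Fin n2), X k i = x (finProdFinEquiv (i, k))) :
    Lone R (n1 * n2) *ᵥ x =
      vecM (Lone R n2 * X) + vecM (Jmat R n2 * X * Ustrict R n1) := by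
  have ha : ∀ a b : ℕ, a < b → n2 * a + n2 ≤ n2 * b := by
    intro a b h
    have := Nat.mul_le_mul_left n2 h
    simpa [Nat.mul_succ] using this
  funext t
  obtain ⟨⟨i, k⟩, rfl⟩ := finProdFinEquiv.surjective t
  simp only [Pi.add_apply, vecM, Equiv.symm_apply_apply, Matrix.mul_apply, mulVec, dotProduct,
    Lone, Ustrict, Jmat, Matrix.of_apply, hX]
  rw [← Equiv.sum_comp finProdFinEquiv
    (fun s => (if s ≤ finProdFinEquiv (i, k) then (1:R) else 0) * x s)]
  rw [Fintype.sum_prod_type]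
  have key : ∀ i' : Fin n1, ∀ k' : Fin n2,
      (finProdFinEquiv (i', k') ≤ finProdFinEquiv (i, k)) ↔
        (i' < i ∨ (i' = i ∧ k' ≤ k)) := by
    intro i' k'
    simp only [Fin.le_def, Fin.lt_def, finProdFinEquiv_apply_val, Fin.ext_iff]
    have hk := k.isLt; have hk' := k'.isLt
    rcases lt_trichotomy i'.val i.val with h | h | h
    · have := ha _ _ h; omega
    · have : i' = i := Fin.ext h
      subst this; omega
    · have := ha _ _ h; omega
  simp only [key]
  rw [show (∑ k' : Fin n2, (if k' ≤ k then (1:R) else 0) * x (finProdFinEquiv (i, k')))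
      = ∑ i' : Fin n1, if i' = i then
          (∑ k' : Fin n2, (if k' ≤ k then (1:R) else 0) * x (finProdFinEquiv (i', k'))) else 0 by
    rw [Finset.sum_ite_eq' Finset.univ i
      (fun i' => ∑ k' : Fin n2, (if k' ≤ k then (1:R) else 0) * x (finProdFinEquiv (i', k')))]
    simp]
  rw [← Finset.sum_add_distrib]
  apply Finset.sum_congr rfl
  intro i' _
  rcases lt_trichotomy i' i with h | h | h
  · simp [h, h.ne, one_mul]
  · subst h
    simp [lt_irrefl]
  · have h1' : ¬ i' < i := not_lt_of_gt h
    have h2' : i' ≠ i := ne_of_gt h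
    simp [h1', h2']
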